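/- The Gibbs distribution π^η with the anyput throughput T_w = ν_w·γ_w satisfies detailed balance with respect to the anyput-mode EconCast-C transition rates: for all w, w' ∈ W, π_w^η · r(w,w') = π_{w'}^η · r(w',w). -/

import Mathlib

open Finset

inductive NodeState : Type
  | s | l | x
deriving DecidableEq

instance instFintypeNodeState : Fintype NodeState :=
  ⟨{NodeState.s, NodeState.l, NodeState.x}, fun a => by cases a <;> simp⟩

abbrev NetState (N : ℕ) := Fin N → NodeState

/-- Number of nodes in transmit state. -/
def numTransmit {N : ℕ} (w : NetState N) : ℕ :=
  (univ.filter fun i => w i = NodeState.x).card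

/-- Number of nodes in listen state. -/
def numListen {N : ℕ} (w : NetState N) : ℕ :=
  (univ.filter fun i => w i = NodeState.l).card

/-- The (finite) set `W` of collision-free network states. -/
def CF (N : ℕ) : Finset (NetState N) :=
  univ.filter fun w => numTransmit w ≤ 1

/-- Indicator `ν_w` that exactly one node is transmitting. -/
def nu {N : ℕ} (w : NetState N) : ℝ := if numTransmit w = 1 then 1 else 0

/-- Indicator `γ_w` that at least one node is listening. -/
def gam {N : ℕ} (w : NetState N) : ℝ := if 0 < numListen w then 1 else 0

/-- Anyput throughput `T_w = ν_w · γ_w` of a state. -/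
noncomputable def Ta {N : ℕ} (w : NetState N) : ℝ := nu w * gam w

/-- The penalty `P_w = Σ_{i: w_i=l} η_i L_i + Σ_{i: w_i=x} η_i X_i`. -/
noncomputable def penalty {N : ℕ} (η L X : Fin N → ℝ) (w : NetState N) : ℝ :=
  ∑ i ∈ univ.filter (fun i => w i = NodeState.l), η i * L i
  + ∑ i ∈ univ.filter (fun i => w i = NodeState.x), η i * X i

/-- Normalizing constant `Z^η`. -/
noncomputable def Zfun (N : ℕ) (σ : ℝ) (η L X : Fin N → ℝ) (T : NetState N → ℝ) : ℝ :=
  ∑ w ∈ CF N, Real.exp ((T w - penalty η L X w) / σ)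

/-- The Gibbs distribution `π^η_w = exp((T_w − P_w)/σ)/Z^η`. -/
noncomputable def gibbs (N : ℕ) (σ : ℝ) (η L X : Fin N → ℝ) (T : NetState N → ℝ)
    (w : NetState N) : ℝ :=
  Real.exp ((T w - penalty η L X w) / σ) / Zfun N σ η L X T

/-- Anyput-mode EconCast-C transition rates: from a state with no transmitter, a
sleeping node wakes to listen at rate `exp(−η_i L_i/σ)`, a listening node goes
to sleep at rate `1`, and a listening node starts transmitting at rate
`exp(η_i(L_i − X_i)/σ)`; a transmitting node moves back to listen at rate
`exp(−γ_w/σ)`; all other rates vanish. -/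
noncomputable def rateCA (N : ℕ) (σ : ℝ) (η L X : Fin N → ℝ) (w w' : NetState N) : ℝ :=
  (∑ i : Fin N, if w i = NodeState.s ∧ numTransmit w = 0 ∧ w' = Function.update w i NodeState.l
      then Real.exp (-(η i * L i) / σ) else 0)
  + (∑ i : Fin N, if w i = NodeState.l ∧ numTransmit w = 0 ∧ w' = Function.update w i NodeState.s
      then 1 else 0)
  + (∑ i : Fin N, if w i = NodeState.l ∧ numTransmit w = 0 ∧ w' = Function.update w i NodeState.x
      then Real.exp (η i * (L i - X i) / σ) else 0)
  + (∑ i : Fin N, if w i = NodeState.x ∧ w' = Function.update w i NodeState.l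
      then Real.exp (-(gam w) / σ) else 0)

/-! Both rates vanish unless `w'` differs from `w` at a single node `i`, and then each is a single
term. Sleep ↔ transmit has rate zero in both directions; for sleep ↔ listen and listen ↔ transmit
the ratio of forward to backward rate is `exp ((ΔT − ΔP) / σ)`: waking up costs `η_i L_i` of
penalty, and starting to transmit costs `η_i (X_i − L_i)` and raises the throughput from `0` to
`γ_{w'}`, which the back rate `exp (−γ_{w'} / σ)` compensates. The back rate does not check that
the other nodes are silent; collision-freeness of `w'` does. -/

open Function

theorem Finset.sum_apply_update_add {α β M : Type*} [Fintype α] [DecidableEq α]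
    [AddCommMonoid M] (f : α → β → M) (w : α → β) (i : α) (v : β) :
    ∑ j, f j (update w i v j) + f i (w i) = ∑ j, f j (w j) + f i v := by
  rw [Finset.sum_congr rfl fun j _ => apply_update f w i v j,
    Finset.sum_update_of_mem (Finset.mem_univ i),
    Finset.sum_eq_add_sum_sdiff_singleton_of_mem (Finset.mem_univ i) fun j => f j (w j)]
  abel

theorem Finset.sum_ite_and_update_eq {α β M : Type*} [Fintype α] [DecidableEq α]
    [DecidableEq β] [AddCommMonoid M] {w : α → β} {i : α} {u v : β} (p : α → Prop) [DecidablePred p]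
    (hp : ∀ j, p j → w j ≠ u) (a : α → M) :
    (∑ j, if p j ∧ update w i v = update w j u then a j else 0)
      = if p i ∧ v = u then a i else 0 := by
  rw [Finset.sum_eq_single_of_mem i (Finset.mem_univ i)]
  · simp only [(update_injective w i).eq_iff]
  · intro j _ hji
    refine if_neg fun ⟨hpj, he⟩ => hji ?_
    by_contra hij
    have := congrFun he j
    rw [update_of_ne hij, update_self] at this
    exact hp j hpj this

theorem exists_update_ne_symm {α β : Type*} [DecidableEq α] {w w' : α → β}
    (h : ∃ i v, w i ≠ v ∧ w' = update w i v) : ∃ i v, w' i ≠ v ∧ w = update w' i v := by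
  obtain ⟨i, v, hv, rfl⟩ := h
  exact ⟨i, w i, by simpa using hv.symm, by rw [update_idem, update_eq_self]⟩

section EconCast

variable {N : ℕ}

theorem numTransmit_eq_sum (w : NetState N) :
    numTransmit w = ∑ j, if w j = NodeState.x then 1 else 0 :=
  Finset.card_filter _ _

theorem numTransmit_update_add (w : NetState N) (i : Fin N) (v : NodeState) :
    numTransmit (update w i v) + (if w i = NodeState.x then 1 else 0)
      = numTransmit w + if v = NodeState.x then 1 else 0 := by
  simp only [numTransmit_eq_sum]
  exact Finset.sum_apply_update_add (fun _ a => if a = NodeState.x then 1 else 0) w i v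

def sitePenalty (η L X : Fin N → ℝ) (j : Fin N) : NodeState → ℝ
  | .s => 0
  | .l => η j * L j
  | .x => η j * X j

theorem penalty_eq_sum_sitePenalty (η L X : Fin N → ℝ) (w : NetState N) :
    penalty η L X w = ∑ j, sitePenalty η L X j (w j) := by
  rw [penalty, Finset.sum_filter, Finset.sum_filter, ← Finset.sum_add_distrib]
  refine Finset.sum_congr rfl fun j _ => ?_
  cases w j <;> simp [sitePenalty]

theorem penalty_update_add (η L X : Fin N → ℝ) (w : NetState N) (i : Fin N) (v : NodeState) :
    penalty η L X (update w i v) + sitePenalty η L X i (w i)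
      = penalty η L X w + sitePenalty η L X i v := by
  simp only [penalty_eq_sum_sitePenalty]
  exact Finset.sum_apply_update_add (sitePenalty η L X) w i v

theorem Ta_eq_zero_of_numTransmit_eq_zero {w : NetState N} (h : numTransmit w = 0) :
    Ta w = 0 := by
  simp [Ta, nu, h]

theorem Ta_eq_gam_of_numTransmit_eq_one {w : NetState N} (h : numTransmit w = 1) :
    Ta w = gam w := by
  simp [Ta, nu, h]

variable (σ : ℝ) (η L X : Fin N → ℝ)

theorem rateCA_update_right (w : NetState N) (i : Fin N) (v : NodeState) :
    rateCA N σ η L X w (update w i v)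
      = (if w i = .s ∧ numTransmit w = 0 ∧ v = .l then Real.exp (-(η i * L i) / σ) else 0)
        + (if w i = .l ∧ numTransmit w = 0 ∧ v = .s then 1 else 0)
        + (if w i = .l ∧ numTransmit w = 0 ∧ v = .x
            then Real.exp (η i * (L i - X i) / σ) else 0)
        + (if w i = .x ∧ v = .l then Real.exp (-(gam w) / σ) else 0) := by
  simp only [rateCA, ← and_assoc]
  rw [Finset.sum_ite_and_update_eq _ (fun j hj => by simp [hj.1]),
    Finset.sum_ite_and_update_eq _ (fun j hj => by simp [hj.1]),
    Finset.sum_ite_and_update_eq _ (fun j hj => by simp [hj.1]),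
    Finset.sum_ite_and_update_eq _ (fun j hj => by simp [hj])]

theorem rateCA_update_left (w : NetState N) (i : Fin N) (v : NodeState) :
    rateCA N σ η L X (update w i v) w
      = (if v = .s ∧ numTransmit (update w i v) = 0 ∧ w i = .l
            then Real.exp (-(η i * L i) / σ) else 0)
        + (if v = .l ∧ numTransmit (update w i v) = 0 ∧ w i = .s then 1 else 0)
        + (if v = .l ∧ numTransmit (update w i v) = 0 ∧ w i = .x
            then Real.exp (η i * (L i - X i) / σ) else 0)
        + (if v = .x ∧ w i = .l then Real.exp (-(gam (update w i v)) / σ) else 0) := by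
  have := rateCA_update_right σ η L X (update w i v) i (w i)
  rwa [update_idem, update_eq_self, update_self] at this

theorem rateCA_eq_zero_of_not_exists_update {w w' : NetState N}
    (h : ¬ ∃ i v, w i ≠ v ∧ w' = update w i v) : rateCA N σ η L X w w' = 0 := by
  have hsum : ∀ (p : Fin N → Prop) [DecidablePred p] (u : NodeState) (a : Fin N → ℝ),
      (∀ j, p j → w j ≠ u) → (∑ j, if p j ∧ w' = update w j u then a j else 0) = 0 :=
    fun p _ u a hp => Finset.sum_eq_zero fun j _ =>
      if_neg fun ⟨hpj, he⟩ => h ⟨j, u, hp j hpj, he⟩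
  simp only [rateCA, ← and_assoc]
  rw [hsum _ _ _ (fun j hj => by simp [hj.1]), hsum _ _ _ (fun j hj => by simp [hj.1]),
    hsum _ _ _ (fun j hj => by simp [hj.1]), hsum _ _ _ (fun j hj => by simp [hj])]
  norm_num

theorem gibbs_mul_eq_gibbs_mul_of_exp {T : NetState N → ℝ} {w w' : NetState N} {a b : ℝ}
    (h : Real.exp ((T w - penalty η L X w) / σ) * a
      = Real.exp ((T w' - penalty η L X w') / σ) * b) :
    gibbs N σ η L X T w * a = gibbs N σ η L X T w' * b := by
  rw [gibbs, gibbs, div_mul_eq_mul_div, div_mul_eq_mul_div, h]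

variable {σ η L X}

theorem gibbs_mul_rateCA_sleep_listen {w : NetState N} {i : Fin N} (hi : w i = .s) :
    gibbs N σ η L X Ta w * rateCA N σ η L X w (update w i .l)
      = gibbs N σ η L X Ta (update w i .l) * rateCA N σ η L X (update w i .l) w := by
  have hnt : numTransmit (update w i .l) = numTransmit w := by
    simpa [hi] using numTransmit_update_add w i .l
  have hpen : penalty η L X (update w i .l) = penalty η L X w + η i * L i := by
    simpa [hi, sitePenalty] using penalty_update_add η L X w i .l
  by_cases h0 : numTransmit w = 0
  · simp only [rateCA_update_right, rateCA_update_left, hi, hnt, h0]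
    simp only [and_self, ↓reduceIte, reduceCtorEq, and_false, add_zero, and_true, zero_add]
    apply gibbs_mul_eq_gibbs_mul_of_exp
    rw [Ta_eq_zero_of_numTransmit_eq_zero h0, Ta_eq_zero_of_numTransmit_eq_zero (hnt.trans h0),
      hpen, mul_one, ← Real.exp_add]
    congr 1
    ring
  · simp [rateCA_update_right, rateCA_update_left, hi, hnt, h0]

theorem gibbs_mul_rateCA_listen_transmit {w : NetState N} {i : Fin N} (hi : w i = .l)
    (hw' : update w i .x ∈ CF N) :
    gibbs N σ η L X Ta w * rateCA N σ η L X w (update w i .x)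
      = gibbs N σ η L X Ta (update w i .x) * rateCA N σ η L X (update w i .x) w := by
  have hnt : numTransmit (update w i .x) = numTransmit w + 1 := by
    simpa [hi] using numTransmit_update_add w i .x
  have hpen : penalty η L X (update w i .x) + η i * L i = penalty η L X w + η i * X i := by
    simpa [hi, sitePenalty] using penalty_update_add η L X w i .x
  have hw0 : numTransmit w = 0 := by simp [CF] at hw'; omega
  simp only [rateCA_update_right, rateCA_update_left, hi, hw0]
  simp only [reduceCtorEq, and_false, and_self, ↓reduceIte, add_zero, zero_add, and_true,
    false_and]
  apply gibbs_mul_eq_gibbs_mul_of_exp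
  rw [Ta_eq_zero_of_numTransmit_eq_zero hw0, Ta_eq_gam_of_numTransmit_eq_one (by omega),
    ← Real.exp_add, ← Real.exp_add]
  congr 1
  linear_combination (1 / σ) * hpen

theorem gibbs_mul_rateCA_sleep_transmit {w : NetState N} {i : Fin N} (hi : w i = .s) :
    gibbs N σ η L X Ta w * rateCA N σ η L X w (update w i .x)
      = gibbs N σ η L X Ta (update w i .x) * rateCA N σ η L X (update w i .x) w := by
  simp [rateCA_update_right, rateCA_update_left, hi]

theorem gibbs_mul_rateCA_update_comm {w : NetState N} {i : Fin N} {v : NodeState}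
    (hw : w ∈ CF N) (hw' : update w i v ∈ CF N) (hv : w i ≠ v) :
    gibbs N σ η L X Ta w * rateCA N σ η L X w (update w i v)
      = gibbs N σ η L X Ta (update w i v) * rateCA N σ η L X (update w i v) w := by
  have hback : ∀ u, update (update w i u) i (w i) = w := fun u => by
    rw [update_idem, update_eq_self]
  cases hwi : w i <;> cases v <;> rw [hwi] at hback hv <;> try exact absurd rfl hv
  · exact gibbs_mul_rateCA_sleep_listen hwi
  · exact gibbs_mul_rateCA_sleep_transmit hwi
  · simpa only [hback] using (gibbs_mul_rateCA_sleep_listen (update_self i .s w)).symm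
  · exact gibbs_mul_rateCA_listen_transmit hwi hw'
  · simpa only [hback] using (gibbs_mul_rateCA_sleep_transmit (update_self i .s w)).symm
  · simpa only [hback] using
      (gibbs_mul_rateCA_listen_transmit (update_self i .l w) (by rwa [hback])).symm

end EconCast

theorem gibbs_detailed_balance_econcastC_anyput_general (N : ℕ)
    (σ : ℝ) (η L X : Fin N → ℝ) :
    ∀ w ∈ CF N, ∀ w' ∈ CF N,
      gibbs N σ η L X Ta w * rateCA N σ η L X w w'
        = gibbs N σ η L X Ta w' * rateCA N σ η L X w' w := by
  intro w hw w' hw'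
  by_cases hmove : ∃ i v, w i ≠ v ∧ w' = update w i v
  · obtain ⟨i, v, hv, rfl⟩ := hmove
    exact gibbs_mul_rateCA_update_comm hw hw' hv
  · rw [rateCA_eq_zero_of_not_exists_update σ η L X hmove,
      rateCA_eq_zero_of_not_exists_update σ η L X (mt exists_update_ne_symm hmove),
      mul_zero, mul_zero]

/-- The Gibbs distribution with anyput throughput satisfies
detailed balance w.r.t. the anyput-mode EconCast-C transition rates. -/
theorem gibbs_detailed_balance_econcastC_anyput (N : ℕ) (hN : 2 ≤ N)
    (σ : ℝ) (hσ : 0 < σ) (η L X : Fin N → ℝ)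
    (hη : ∀ i, 0 ≤ η i) (hL : ∀ i, 0 < L i) (hX : ∀ i, 0 < X i) :
    ∀ w ∈ CF N, ∀ w' ∈ CF N,
      gibbs N σ η L X Ta w * rateCA N σ η L X w w'
        = gibbs N σ η L X Ta w' * rateCA N σ η L X w' w :=
  gibbs_detailed_balance_econcastC_anyput_general N σ η L X
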